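/- arXiv:1001.2496 — 3 statements merged into one kernel-verified Lean document; each statement's English description precedes it below -/
import Mathlib

section
/- Every root of the polynomial p_n(z) = Σ_{k=0}^n (n choose k)^2 z^k is a simple root (has multiplicity one). -/
/-!
`p_n` solves `z (1 - z) p'' + (1 + (2n - 1) z) p' = n² p`, whose leading coefficient `z (1 - z)`
vanishes only at `0` and `1`. Neither is a root, since `p_n(0) = 1` and `p_n(1) = C(2n, n)`, and
at any other point a polynomial solution of such an ODE cannot have a multiple root.
-/

open Polynomial

noncomputable def pnPoly (n : ℕ) : Polynomial ℂ :=
  ∑ k ∈ Finset.range (n + 1), Polynomial.C ((n.choose k : ℂ) ^ 2) * Polynomial.X ^ k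

namespace Polynomial

variable {R : Type*} [CommRing R]

/-- A root of multiplicity `m ≥ 2` would be a root of multiplicity `m - 2` of `p''` but of
multiplicity at least `m - 1` of `u * p'' = w * p - v * p'`. -/
theorem rootMultiplicity_le_one_of_ode [IsDomain R] [CharZero R] {p u v w : R[X]} {a : R}
    (hu : ¬ u.IsRoot a)
    (hode : u * derivative (derivative p) + v * derivative p = w * p) :
    p.rootMultiplicity a ≤ 1 := by
  by_contra! hm
  set m := p.rootMultiplicity a
  have hp : p ≠ 0 := by rintro rfl; simp [m] at hm
  obtain ⟨hroot, hroot'⟩ := (one_lt_rootMultiplicity_iff_isRoot hp).1 hm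
  have hm' : (derivative p).rootMultiplicity a = m - 1 := derivative_rootMultiplicity_of_root hroot
  have hm'' : (derivative (derivative p)).rootMultiplicity a = m - 2 := by
    rw [derivative_rootMultiplicity_of_root hroot', hm']
    omega
  have hp'' : derivative (derivative p) ≠ 0 := by
    intro h
    rw [eq_C_of_derivative_eq_zero h, rootMultiplicity_C] at hm'
    omega
  have hu0 : u ≠ 0 := by rintro rfl; simp at hu
  have hdvd : (X - C a) ^ (m - 1) ∣ u * derivative (derivative p) := by
    rw [eq_sub_of_add_eq hode]
    refine dvd_sub (dvd_mul_of_dvd_right ?_ w) (dvd_mul_of_dvd_right ?_ v)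
    · exact (pow_dvd_pow _ (Nat.sub_le m 1)).trans (pow_rootMultiplicity_dvd p a)
    · exact hm' ▸ pow_rootMultiplicity_dvd _ a
  have hle := (le_rootMultiplicity_iff (mul_ne_zero hu0 hp'')).2 hdvd
  rw [rootMultiplicity_mul (mul_ne_zero hu0 hp''), rootMultiplicity_eq_zero hu, hm''] at hle
  omega

theorem coeff_X_mul_derivative (p : R[X]) (k : ℕ) :
    (X * derivative p).coeff k = k * p.coeff k := by
  cases k with
  | zero => simp
  | succ k => rw [coeff_X_mul, coeff_derivative, mul_comm]; push_cast; rfl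

end Polynomial

theorem Nat.cast_succ_mul_choose_succ {R : Type*} [CommRing R] (n k : ℕ) :
    ((k + 1) * n.choose (k + 1) : R) = (n - k) * n.choose k := by
  rcases le_or_gt k n with hk | hk
  · have h := congrArg (Nat.cast : ℕ → R) (Nat.choose_succ_right_eq n k)
    push_cast [Nat.cast_sub hk] at h
    linear_combination h
  · simp [Nat.choose_eq_zero_of_lt hk, Nat.choose_eq_zero_of_lt (Nat.lt_succ_of_lt hk)]

theorem coeff_pnPoly (n k : ℕ) : (pnPoly n).coeff k = (n.choose k : ℂ) ^ 2 := by
  simp only [pnPoly, finsetSum_coeff, coeff_C_mul_X_pow, Finset.sum_ite_eq, Finset.mem_range]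
  split_ifs with hk
  · rfl
  · rw [Nat.choose_eq_zero_of_lt (by omega)]
    simp

theorem eval_zero_pnPoly (n : ℕ) : (pnPoly n).eval 0 = 1 := by
  simp [← coeff_zero_eq_eval_zero, coeff_pnPoly]

theorem eval_one_pnPoly (n : ℕ) : (pnPoly n).eval 1 = n.centralBinom := by
  simp [pnPoly, eval_finsetSum, Nat.centralBinom_eq_two_mul_choose, ← Nat.sum_range_choose_sq]

/-- With the Euler operator `θ = X * d/dX`, the ODE reads `(θ p)' = (n - θ)² p`, which on the
coefficients `c k = (n.choose k)²` is the recurrence `(k + 1)² c (k + 1) = (n - k)² c k`. -/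
theorem pnPoly_ode (n : ℕ) :
    X * (1 - X) * derivative (derivative (pnPoly n))
      + (1 + C (2 * (n : ℂ) - 1) * X) * derivative (pnPoly n) = C ((n : ℂ) ^ 2) * pnPoly n := by
  have euler : X * (1 - X) * derivative (derivative (pnPoly n))
      + (1 + C (2 * (n : ℂ) - 1) * X) * derivative (pnPoly n)
      = derivative (X * derivative (pnPoly n)) - X * derivative (X * derivative (pnPoly n))
        + C (2 * (n : ℂ)) * (X * derivative (pnPoly n)) := by
    simp only [derivative_mul, derivative_X, map_sub, map_one]
    ring
  rw [euler]
  ext k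
  simp only [coeff_add, coeff_sub, coeff_C_mul, coeff_derivative, coeff_X_mul_derivative,
    coeff_pnPoly]
  have h := Nat.cast_succ_mul_choose_succ (R := ℂ) n k
  push_cast
  linear_combination ((k + 1) * (n.choose (k + 1) : ℂ) + (n - k) * n.choose k) * h

theorem pn_roots_simple_general (n : ℕ) (a : ℂ) (ha : (pnPoly n).IsRoot a) :
    Polynomial.rootMultiplicity a (pnPoly n) = 1 := by
  have ha0 : a ≠ 0 := by rintro rfl; simp [IsRoot, eval_zero_pnPoly] at ha
  have ha1 : a ≠ 1 := by rintro rfl; simp [IsRoot, eval_one_pnPoly, Nat.centralBinom_ne_zero] at ha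
  have hu : ¬ (X * (1 - X) : ℂ[X]).IsRoot a := by simp [sub_eq_zero, ha0, Ne.symm ha1]
  have hp : pnPoly n ≠ 0 := fun h ↦ by simpa [h] using eval_zero_pnPoly n
  exact le_antisymm (rootMultiplicity_le_one_of_ode hu (pnPoly_ode n))
    ((rootMultiplicity_pos hp).2 ha)

theorem pn_roots_simple (n : ℕ) (hn : 1 ≤ n) (a : ℂ) (ha : (pnPoly n).IsRoot a) :
    Polynomial.rootMultiplicity a (pnPoly n) = 1 :=
  pn_roots_simple_general n a ha
end

section
/- For any configuration of points {p_{k,i}} (k = 1,…,N, i = 1,…,n_k, all p_{k,i} nonzero and the relevant differences nonzero), extended T-periodically by p_{k+N,i} = p_{k,i} e^T, the total force vanishes: Σ_{k=1}^N Σ_{i=1}^{n_k} F_{k,i} = 0, where F_{k,i} = Σ_{j≠i} (p_{k,i}+p_{k,j})/(n_k²(p_{k,i}-p_{k,j})) + (-1)^k ( Σ_{j=1}^{n_{k+1}} p_{k+1,j}^{(-1)^k} / (n_k n_{k+1}(p_{k+1,j}^{(-1)^k} - p_{k,i}^{(-1)^k})) - Σ_{j=1}^{n_{k-1}} p_{k,i}^{(-1)^k}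 / (n_k n_{k-1}(p_{k,i}^{(-1)^k} - p_{k-1,j}^{(-1)^k})) ). -/
open Finset

/-- `pw k z` is `z^{(-1)^k}`: `z` if `k` is even, `z⁻¹` if `k` is odd. -/
noncomputable def pw (k : ℤ) (z : ℂ) : ℂ := if Even k then z else z⁻¹

/-- The force on the point `p k i`. -/
noncomputable def force (n : ℤ → ℕ) (p : ℤ → ℕ → ℂ) (k : ℤ) (i : ℕ) : ℂ :=
  (∑ j ∈ (range (n k)).erase i,
      (p k i + p k j) / ((n k : ℂ) ^ 2 * (p k i - p k j)))
  + (-1 : ℂ) ^ k *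
    ((∑ j ∈ range (n (k + 1)),
        pw k (p (k + 1) j) /
          ((n k : ℂ) * (n (k + 1) : ℂ) * (pw k (p (k + 1) j) - pw k (p k i))))
     - (∑ j ∈ range (n (k - 1)),
        pw k (p k i) /
          ((n k : ℂ) * (n (k - 1) : ℂ) * (pw k (p k i) - pw k (p (k - 1) j)))))

/-!
The intra-level terms cancel in pairs, being antisymmetric in `(i, j)`. Let `A k`
(`upperCoupling`) be the coupling of level `k` to level `k + 1` and `B k` (`lowerCoupling`) that
of level `k` to level `k - 1`. Since `pw (k + 1) = (pw k)⁻¹`, the identity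
`a⁻¹ / (a⁻¹ - b⁻¹) + a / (a - b) = 1` gives `B (k + 1) = 1 - A k`, so level `k` contributes
`(-1)^k (A k + A (k - 1) - 1) = G k - G (k - 1)` with `G k = (-1)^k (A k - 1/2)`. The total
telescopes to `G N - G 0 = 0`: `A` is `N`-periodic because the factor `e^T` cancels from every
term, and `N` is even.
-/

theorem sum_sum_erase_eq_zero_of_antisymm {ι M : Type*} [DecidableEq ι] [AddCommGroup M]
    (s : Finset ι) (f : ι → ι → M) (hf : ∀ i j, i ≠ j → f j i = -f i j) :
    ∑ i ∈ s, ∑ j ∈ s.erase i, f i j = 0 := by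
  rw [sum_sigma']
  refine sum_involution (fun x _ => ⟨x.2, x.1⟩) ?_ ?_ ?_ ?_
  · rintro ⟨i, j⟩ hij
    simp only [mem_sigma, mem_erase] at hij
    simp [hf i j (Ne.symm hij.2.1)]
  · rintro ⟨i, j⟩ hij - h
    simp only [mem_sigma, mem_erase] at hij
    simp only [Sigma.mk.injEq, heq_eq_eq] at h
    exact hij.2.1 h.1
  · rintro ⟨i, j⟩ hij
    simp only [mem_sigma, mem_erase] at hij ⊢
    exact ⟨hij.2.2, Ne.symm hij.2.1, hij.1⟩
  · intros; rfl

theorem sum_Icc_one_sub_sub_one {M : Type*} [AddCommGroup M] (f : ℤ → M) (m : ℕ) :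
    ∑ k ∈ Icc (1 : ℤ) m, (f k - f (k - 1)) = f m - f 0 := by
  induction m with
  | zero => simp
  | succ m ih =>
    push_cast
    rw [← insert_Icc_right_eq_Icc_add_one (by omega), sum_insert (by simp), ih,
      add_sub_cancel_right, sub_add_sub_cancel]

theorem inv_div_mul_inv_sub_inv_add_div_mul_sub {K : Type*} [Field K] {x y c : K}
    (hx : x ≠ 0) (hy : y ≠ 0) (hxy : x ≠ y) (hc : c ≠ 0) :
    x⁻¹ / (c * (x⁻¹ - y⁻¹)) + x / (c * (x - y)) = c⁻¹ := by
  have hxy' : x - y ≠ 0 := sub_ne_zero.mpr hxy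
  have hyx : y - x ≠ 0 := sub_ne_zero.mpr hxy.symm
  field_simp
  ring

theorem pw_ne_zero {k : ℤ} {z : ℂ} (hz : z ≠ 0) : pw k z ≠ 0 := by
  unfold pw; split <;> simp [hz]

theorem pw_add_one (k : ℤ) (z : ℂ) : pw (k + 1) z = (pw k z)⁻¹ := by
  by_cases h : Even k <;> simp [pw, h]

theorem pw_mul (k : ℤ) (z w : ℂ) : pw k (z * w) = pw k z * pw k w := by
  unfold pw; split_ifs <;> simp only [mul_inv]

theorem pw_add_of_even {m : ℤ} (hm : Even m) (k : ℤ) (z : ℂ) : pw (k + m) z = pw k z := by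
  simp [pw, Int.even_add, hm]

noncomputable def upperCoupling (n : ℤ → ℕ) (p : ℤ → ℕ → ℂ) (k : ℤ) : ℂ :=
  ∑ i ∈ range (n k), ∑ j ∈ range (n (k + 1)),
    pw k (p (k + 1) j) /
      ((n k : ℂ) * (n (k + 1) : ℂ) * (pw k (p (k + 1) j) - pw k (p k i)))

noncomputable def lowerCoupling (n : ℤ → ℕ) (p : ℤ → ℕ → ℂ) (k : ℤ) : ℂ :=
  ∑ i ∈ range (n k), ∑ j ∈ range (n (k - 1)),
    pw k (p k i) /
      ((n k : ℂ) * (n (k - 1) : ℂ) * (pw k (p k i) - pw k (p (k - 1) j)))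

section Couplings

variable (n : ℤ → ℕ) (p : ℤ → ℕ → ℂ)

theorem sum_force_eq (k : ℤ) :
    ∑ i ∈ range (n k), force n p k i = (-1) ^ k * (upperCoupling n p k - lowerCoupling n p k) := by
  have hself : ∑ i ∈ range (n k), ∑ j ∈ (range (n k)).erase i,
      (p k i + p k j) / ((n k : ℂ) ^ 2 * (p k i - p k j)) = 0 :=
    sum_sum_erase_eq_zero_of_antisymm _ _ fun i j _ => by
      rw [add_comm, ← neg_sub (p k i), mul_neg, div_neg]
  unfold force
  rw [sum_add_distrib, hself, zero_add, ← mul_sum, sum_sub_distrib]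
  rfl

theorem lowerCoupling_add_one_add_upperCoupling {k : ℤ} (hn : n k ≠ 0) (hn' : n (k + 1) ≠ 0)
    (hp : ∀ i < n k, p k i ≠ 0) (hp' : ∀ j < n (k + 1), p (k + 1) j ≠ 0)
    (hadj : ∀ i j, i < n k → j < n (k + 1) → pw k (p (k + 1) j) ≠ pw k (p k i)) :
    lowerCoupling n p (k + 1) + upperCoupling n p k = 1 := by
  have hc : ((n (k + 1) : ℂ) * n k) ≠ 0 := by positivity
  rw [lowerCoupling, upperCoupling, sum_comm (s := range (n k)), add_sub_cancel_right,
    ← sum_add_distrib]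
  calc _ = ∑ _i ∈ range (n (k + 1)), ∑ _j ∈ range (n k), ((n (k + 1) : ℂ) * n k)⁻¹ := by
        refine sum_congr rfl fun i hi => ?_
        rw [← sum_add_distrib]
        refine sum_congr rfl fun j hj => ?_
        rw [mem_range] at hi hj
        rw [pw_add_one, pw_add_one, mul_comm (n k : ℂ)]
        exact inv_div_mul_inv_sub_inv_add_div_mul_sub (pw_ne_zero (hp' i hi))
          (pw_ne_zero (hp j hj)) (hadj j i hj hi) hc
    _ = 1 := by
        simp only [sum_const, card_range, nsmul_eq_mul]
        field_simp

theorem upperCoupling_add_period {m : ℤ} (hm : Even m) (hnper : ∀ k, n (k + m) = n k) {c : ℂ}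
    (hc : c ≠ 0) (hper : ∀ k i, p (k + m) i = p k i * c) (k : ℤ) :
    upperCoupling n p (k + m) = upperCoupling n p k := by
  have hshift : k + m + 1 = k + 1 + m := by ring
  have hc' : pw k c ≠ 0 := pw_ne_zero hc
  simp only [upperCoupling, hshift, hnper, hper, pw_add_of_even hm, pw_mul, ← sub_mul,
    ← mul_assoc, mul_div_mul_right _ _ hc']

end Couplings

theorem total_force_zero_general (N : ℕ) (hN : Even N)
    (n : ℤ → ℕ) (hnpos : ∀ k, 0 < n k) (hnper : ∀ k, n (k + N) = n k)
    (T : ℂ) (p : ℤ → ℕ → ℂ)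
    (hper : ∀ k i, p (k + N) i = p k i * Complex.exp T)
    (hne : ∀ k i, i < n k → p k i ≠ 0)
    (hadj : ∀ k i j, i < n k → j < n (k + 1) →
      pw k (p (k + 1) j) ≠ pw k (p k i)) :
    ∑ k ∈ Finset.Icc (1 : ℤ) (N : ℤ), ∑ i ∈ range (n k), force n p k i = 0 := by
  have hlower (k : ℤ) : lowerCoupling n p k = 1 - upperCoupling n p (k - 1) := by
    have := lowerCoupling_add_one_add_upperCoupling n p (hnpos _).ne' (hnpos _).ne' (hne _)
      (hne _) (hadj (k - 1))
    rw [sub_add_cancel] at this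
    exact eq_sub_of_add_eq this
  set G : ℤ → ℂ := fun k => (-1) ^ k * (upperCoupling n p k - 1 / 2)
  have hstep (k : ℤ) : ∑ i ∈ range (n k), force n p k i = G k - G (k - 1) := by
    simp only [G]
    rw [sum_force_eq, hlower, zpow_sub_one₀ (by norm_num)]
    ring
  have hperiod : G N = G 0 := by
    have hN' : Even (N : ℤ) := (Int.even_coe_nat N).mpr hN
    simp only [G, hN'.neg_one_zpow, zpow_zero]
    rw [← zero_add (N : ℤ), upperCoupling_add_period n p hN' hnper (Complex.exp_ne_zero T) hper]
  rw [sum_congr rfl fun k _ => hstep k, sum_Icc_one_sub_sub_one, hperiod, sub_self]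

theorem total_force_zero (N : ℕ) (hN : Even N) (hNpos : 0 < N)
    (n : ℤ → ℕ) (hnpos : ∀ k, 0 < n k) (hnper : ∀ k, n (k + N) = n k)
    (T : ℂ) (p : ℤ → ℕ → ℂ)
    (hper : ∀ k i, p (k + N) i = p k i * Complex.exp T)
    (hne : ∀ k i, i < n k → p k i ≠ 0)
    (hdist : ∀ k i j, i < n k → j < n k → i ≠ j → p k i ≠ p k j)
    (hadj : ∀ k i j, i < n k → j < n (k + 1) →
      pw k (p (k + 1) j) ≠ pw k (p k i))
    (hadj' : ∀ k i j, i < n k → j < n (k - 1) →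
      pw k (p k i) ≠ pw k (p (k - 1) j)) :
    ∑ k ∈ Finset.Icc (1 : ℤ) (N : ℤ), ∑ i ∈ range (n k), force n p k i = 0 :=
  total_force_zero_general N hN n hnpos hnper T p hper hne hadj
end

section
/- All roots of the polynomial p_n(z) = Σ_{k=0}^n (n choose k)^2 z^k are real and negative. -/
/-
By Leibniz' rule, `Dⁿ((x + 1)ⁿ xⁿ) = n! Σₖ C(n,k)² (x + 1)ᵏ xⁿ⁻ᵏ`. The polynomial `(x + 1)ⁿ xⁿ`
has all its roots real, and by Rolle's theorem so do its derivatives. Under `x = 1 / (z - 1)` the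
right-hand side becomes `n! pₙ(z) / (z - 1)ⁿ`, so every root `z` of `pₙ` is real; since `pₙ` has
positive coefficients, it is negative.
-/

noncomputable def pn (n : ℕ) (z : ℂ) : ℂ :=
  ∑ k ∈ Finset.range (n + 1), ((n.choose k : ℂ)) ^ 2 * z ^ k

open Polynomial Finset Nat

namespace Polynomial

theorem Splits.derivative {p : ℝ[X]} (hp : p.Splits) : (Polynomial.derivative p).Splits := by
  rw [splits_iff_card_roots] at hp ⊢
  have rolle := card_roots_le_derivative p
  have card_le := card_roots' (Polynomial.derivative p)
  have degree_le := natDegree_derivative_le p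
  omega

theorem Splits.iterate_derivative {p : ℝ[X]} (hp : p.Splits) (k : ℕ) :
    (Polynomial.derivative^[k] p).Splits := by
  induction k with
  | zero => exact hp
  | succ k ih => exact Function.iterate_succ_apply' Polynomial.derivative k p ▸ ih.derivative

end Polynomial

theorem Nat.descFactorial_sub_mul_descFactorial_mul_choose {n k : ℕ} (hk : k ≤ n) :
    n.descFactorial (n - k) * n.descFactorial k * n.choose k = n ! * n.choose k ^ 2 := by
  rw [descFactorial_eq_factorial_mul_choose, descFactorial_eq_factorial_mul_choose,
    choose_symm hk, ← choose_mul_factorial_mul_factorial hk]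
  ring

theorem iterate_derivative_X_add_one_pow_mul_X_pow {R : Type*} [CommRing R] (n : ℕ) :
    derivative^[n] (((X : R[X]) + 1) ^ n * X ^ n) =
      n ! • ∑ k ∈ range (n + 1), n.choose k ^ 2 • ((X + 1) ^ k * X ^ (n - k)) := by
  rw [iterate_derivative_mul, smul_sum]
  refine sum_congr rfl fun k hk => ?_
  have hkn : k ≤ n := Nat.lt_succ_iff.mp (mem_range.mp hk)
  rw [← C_1, iterate_derivative_X_add_pow, iterate_derivative_X_pow_eq_C_mul, C_eq_natCast,
    Nat.sub_sub_self hkn, smul_smul, ← Nat.descFactorial_sub_mul_descFactorial_mul_choose hkn]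
  simp only [nsmul_eq_mul, Nat.cast_mul]
  ring

theorem sub_one_pow_mul_eval_iterate_derivative {n : ℕ} {z : ℂ} (hz : z ≠ 1) :
    (z - 1) ^ n * (derivative^[n] (((X : ℂ[X]) + 1) ^ n * X ^ n)).eval (z - 1)⁻¹ =
      n ! * pn n z := by
  have hinv : (z - 1)⁻¹ * (z - 1) = 1 := inv_mul_cancel₀ (sub_ne_zero.mpr hz)
  have hinv_add_one : ((z - 1)⁻¹ + 1) * (z - 1) = z := by linear_combination hinv
  rw [iterate_derivative_X_add_one_pow_mul_X_pow, eval_smul, eval_finsetSum, nsmul_eq_mul,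
    mul_left_comm, mul_sum, pn]
  congr 1
  refine sum_congr rfl fun k hk => ?_
  have hkn : k ≤ n := Nat.lt_succ_iff.mp (mem_range.mp hk)
  calc (z - 1) ^ n * eval (z - 1)⁻¹ (n.choose k ^ 2 • ((X + 1) ^ k * X ^ (n - k)))
      = n.choose k ^ 2 * (((z - 1)⁻¹ + 1) * (z - 1)) ^ k * ((z - 1)⁻¹ * (z - 1)) ^ (n - k) := by
        rw [mul_pow, mul_pow, ← Nat.add_sub_cancel' hkn, pow_add, Nat.add_sub_cancel' hkn]
        simp only [nsmul_eq_mul, eval_mul, eval_pow, eval_add, eval_X, eval_one, eval_natCast]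
        push_cast
        ring
    _ = n.choose k ^ 2 * z ^ k := by rw [hinv, hinv_add_one, one_pow, mul_one]

theorem pn_ofReal_ne_zero (n : ℕ) {t : ℝ} (ht : 0 ≤ t) : pn n t ≠ 0 := by
  have hsum : 0 < ∑ k ∈ range (n + 1), (n.choose k : ℝ) ^ 2 * t ^ k :=
    sum_pos' (fun k _ => by positivity) ⟨0, by simp⟩
  have : pn n t = ((∑ k ∈ range (n + 1), (n.choose k : ℝ) ^ 2 * t ^ k : ℝ) : ℂ) := by
    simp [pn]
  rw [this]
  exact_mod_cast hsum.ne'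

theorem exists_ofReal_eq_of_pn_eq_zero {n : ℕ} {z : ℂ} (hz : pn n z = 0) : ∃ x : ℝ, z = x := by
  set Q : ℝ[X] := derivative^[n] ((X + 1) ^ n * X ^ n)
  have hQ_map : Q.map (algebraMap ℝ ℂ) = derivative^[n] ((X + 1) ^ n * X ^ n) := by
    simp [Q, ← iterate_derivative_map]
  have hQ_splits : Q.Splits :=
    Splits.iterate_derivative (((Splits.X_add_C 1).pow n).mul (Splits.X_pow n)) n
  have hQ_ne_zero : Q ≠ 0 := by
    intro hQ
    have := sub_one_pow_mul_eval_iterate_derivative (n := n) (zero_ne_one' ℂ)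
    rw [← hQ_map, hQ, Polynomial.map_zero, eval_zero, mul_zero, eq_comm] at this
    exact pn_ofReal_ne_zero n le_rfl (by simpa [factorial_ne_zero] using this)
  have hz1 : z ≠ 1 := by
    rintro rfl
    exact pn_ofReal_ne_zero n zero_le_one (by simpa using hz)
  have hroot : (Q.map (algebraMap ℝ ℂ)).IsRoot (z - 1)⁻¹ := by
    have := sub_one_pow_mul_eval_iterate_derivative (n := n) hz1
    rw [hz, mul_zero, ← hQ_map] at this
    exact (mul_eq_zero.mp this).resolve_left (pow_ne_zero n (sub_ne_zero.mpr hz1))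
  obtain ⟨r, hr⟩ := hQ_splits.mem_range_of_isRoot hQ_ne_zero hroot
  refine ⟨1 + r⁻¹, ?_⟩
  have hr' : (r : ℂ) = (z - 1)⁻¹ := hr
  push_cast
  rw [hr', inv_inv]
  ring

theorem pn_roots_real_negative_general (n : ℕ) (z : ℂ) (hz : pn n z = 0) :
    ∃ x : ℝ, x < 0 ∧ z = (x : ℂ) := by
  obtain ⟨x, rfl⟩ := exists_ofReal_eq_of_pn_eq_zero hz
  exact ⟨x, lt_of_not_ge fun hx => pn_ofReal_ne_zero n hx hz, rfl⟩

theorem pn_roots_real_negative (n : ℕ) (hn : 1 ≤ n) (z : ℂ) (hz : pn n z = 0) :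
    ∃ x : ℝ, x < 0 ∧ z = (x : ℂ) :=
  pn_roots_real_negative_general n z hz
end
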